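/- Let A be a modal algebra (no monotonicity assumed) and S a countable family of subsets of A. Let Q_S(A) be the set of Q-filters of A for S, let V̄_A(F) = {f(y) | □y ∈ F} where f(x) = {G ∈ Q_S(A) | x ∈ G}, and for X ⊆ Q_S(A) let □' X = {F ∈ Q_S(A) | X ∈ V̄_A(F)}. Then f : A → 𝒫(Q_S(A)) is injective, is a Boolean homomorphism (f(x ⊓ y) = f(x) ∩ f(y), f(¬x) = Q_S(A) \ f(x), f(0) = ∅, f(1) = Q_S(A)), satisfies f(□x) = □' f(x) for every x ∈ A, and satisfies f(⨅X) = ⋂_{x ∈ X} f(x) for every X ∈ S whose infimum ⨅X exists in A. (Extension of the Jónsson–Tarski representation, non-monotonic case.) -/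
import Mathlib


variable {α : Type*}

/-- A filter of a Boolean algebra: a nonempty, upward-closed subset
closed under binary meets. -/
def IsGoodFilter [BooleanAlgebra α] (F : Set α) : Prop :=
  F.Nonempty ∧ (∀ x y : α, x ∈ F → x ≤ y → y ∈ F) ∧
    (∀ x y : α, x ∈ F → y ∈ F → x ⊓ y ∈ F)

/-- A prime filter: a proper filter (⊥ ∉ F) such that x ⊔ y ∈ F implies
x ∈ F or y ∈ F. -/
def IsPrimeFilter [BooleanAlgebra α] (F : Set α) : Prop :=
  IsGoodFilter F ∧ (⊥ : α) ∉ F ∧ ∀ x y : α, x ⊔ y ∈ F → x ∈ F ∨ y ∈ F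

/-- A Q-filter for a family `S` of subsets: a prime filter such that for every
`X ∈ S` whose infimum exists and with `X ⊆ F`, the infimum belongs to `F`. -/
def IsQFilter [BooleanAlgebra α] (S : Set (Set α)) (F : Set α) : Prop :=
  IsPrimeFilter F ∧ ∀ X ∈ S, ∀ m : α, IsGLB X m → X ⊆ F → m ∈ F

/-- The set of all Q-filters for `S`. -/
abbrev QFilt [BooleanAlgebra α] (S : Set (Set α)) := {F : Set α // IsQFilter S F}

/-- The Stone-style map `f x = {F ∈ Q_S(A) | x ∈ F}`. -/
def fset [BooleanAlgebra α] (S : Set (Set α)) (x : α) : Set (QFilt S) :=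
  {F | x ∈ F.1}

/-- The neighborhood map of the frame `J_S(A)`: the upward closure (under ⊆)
of the family `{f y | □y ∈ F}`. -/
def nbhd [BooleanAlgebra α] (box : α → α) (S : Set (Set α)) (F : QFilt S) :
    Set (Set (QFilt S)) :=
  {X | ∃ y : α, box y ∈ F.1 ∧ fset S y ⊆ X}

/-- The neighborhood map of the frame `J̄_S(A)`: the family `{f y | □y ∈ F}`,
without taking upward closure. -/
def nbhdBar [BooleanAlgebra α] (box : α → α) (S : Set (Set α)) (F : QFilt S) :
    Set (Set (QFilt S)) :=
  {X | ∃ y : α, box y ∈ F.1 ∧ fset S y = X}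

section Aux
variable [BooleanAlgebra α]

lemma step_exists (b : α) (X : Set α) (hb : b ≠ ⊥) :
    ∃ c : α, c ≠ ⊥ ∧ c ≤ b ∧ ∀ m : α, IsGLB X m → c ≤ m ∨ ∃ u ∈ X, c ≤ uᶜ := by
  by_cases hm : ∃ m, IsGLB X m
  · obtain ⟨m, hglb⟩ := hm
    by_cases hbm : b ⊓ mᶜ = ⊥
    · refine ⟨b, hb, le_rfl, fun m' h' => Or.inl ?_⟩
      have hmm : m' = m := h'.unique hglb
      subst hmm
      have : b \ m' = ⊥ := by rwa [sdiff_eq]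
      exact sdiff_eq_bot_iff.mp this
    · have h2 : ∃ u ∈ X, (b ⊓ mᶜ) ⊓ uᶜ ≠ ⊥ := by
        by_contra h
        push_neg at h
        have hlb : b ⊓ mᶜ ∈ lowerBounds X := fun u hu => by
          have : (b ⊓ mᶜ) \ u = ⊥ := by rw [sdiff_eq]; exact h u hu
          exact sdiff_eq_bot_iff.mp this
        have : b ⊓ mᶜ ≤ m := hglb.2 hlb
        have : b ⊓ mᶜ ≤ m ⊓ mᶜ := le_inf this inf_le_right
        simp at this
        exact hbm this
      obtain ⟨u, hu, hne⟩ := h2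
      exact ⟨(b ⊓ mᶜ) ⊓ uᶜ, hne, (inf_le_left.trans inf_le_left),
        fun m' h' => Or.inr ⟨u, hu, inf_le_right⟩⟩
  · exact ⟨b, hb, le_rfl, fun m h => absurd ⟨m, h⟩ hm⟩

noncomputable def qseq (e : ℕ → Set α) (a : α) (ha : a ≠ ⊥) : ℕ → {c : α // c ≠ ⊥}
  | 0 => ⟨a, ha⟩
  | n+1 =>
    ⟨(step_exists (qseq e a ha n).1 (e n) (qseq e a ha n).2).choose,
      ((step_exists (qseq e a ha n).1 (e n) (qseq e a ha n).2).choose_spec).1⟩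

lemma qseq_succ_le (e : ℕ → Set α) (a : α) (ha : a ≠ ⊥) (n : ℕ) :
    (qseq e a ha (n+1)).1 ≤ (qseq e a ha n).1 :=
  ((step_exists (qseq e a ha n).1 (e n) (qseq e a ha n).2).choose_spec).2.1

lemma qseq_spec (e : ℕ → Set α) (a : α) (ha : a ≠ ⊥) (n : ℕ) :
    ∀ m : α, IsGLB (e n) m → (qseq e a ha (n+1)).1 ≤ m ∨ ∃ u ∈ e n, (qseq e a ha (n+1)).1 ≤ uᶜ :=
  ((step_exists (qseq e a ha n).1 (e n) (qseq e a ha n).2).choose_spec).2.2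

lemma qseq_antitone (e : ℕ → Set α) (a : α) (ha : a ≠ ⊥) :
    Antitone (fun n => (qseq e a ha n).1) :=
  antitone_nat_of_succ_le (qseq_succ_le e a ha)

end Aux

lemma exists_qfilter [BooleanAlgebra α] {S : Set (Set α)} (hS : S.Countable)
    (a : α) (ha : a ≠ ⊥) :
    ∃ F : Set α, IsQFilter S F ∧ a ∈ F := by
  classical
  obtain ⟨e, he⟩ := (hS.insert ∅).exists_eq_range (Set.insert_nonempty _ _)
  set s : ℕ → α := fun n => (qseq e a ha n).1 with hs
  have hanti : Antitone s := qseq_antitone e a ha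
  have hsne : ∀ n, s n ≠ ⊥ := fun n => (qseq e a ha n).2
  set F₀ : Set α := {b | ∃ n, s n ≤ b} with hF₀
  have hF₀good : IsGoodFilter F₀ :=
    ⟨⟨a, 0, le_rfl⟩, fun x y ⟨n, hn⟩ hxy => ⟨n, hn.trans hxy⟩,
      fun x y ⟨n, hn⟩ ⟨k, hk⟩ =>
        ⟨max n k, le_inf ((hanti (le_max_left n k)).trans hn)
          ((hanti (le_max_right n k)).trans hk)⟩⟩
  set P : Set (Set α) := {G | IsGoodFilter G ∧ (⊥:α) ∉ G ∧ F₀ ⊆ G} with hP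
  have hF₀P : F₀ ∈ P := ⟨hF₀good, fun ⟨n, hn⟩ => hsne n (le_bot_iff.mp hn), subset_rfl⟩
  obtain ⟨M, hF₀M, hMP, hMmax⟩ : ∃ M, F₀ ⊆ M ∧ M ∈ P ∧ ∀ G ∈ P, M ⊆ G → G ⊆ M := by
    obtain ⟨M, h1, h2⟩ := zorn_subset_nonempty P (fun c hcP hc hcne => by
      refine ⟨⋃₀ c, ⟨⟨?_, ?_, ?_⟩, ?_, ?_⟩, fun t ht => Set.subset_sUnion_of_mem ht⟩
      · obtain ⟨t, ht⟩ := hcne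
        obtain ⟨x, hx⟩ := (hcP ht).1.1
        exact ⟨x, t, ht, hx⟩
      · rintro x y ⟨t, ht, hx⟩ hxy
        exact ⟨t, ht, (hcP ht).1.2.1 x y hx hxy⟩
      · rintro x y ⟨t, ht, hx⟩ ⟨u, hu, hy⟩
        rcases hc.total ht hu with h | h
        · exact ⟨u, hu, (hcP hu).1.2.2 x y (h hx) hy⟩
        · exact ⟨t, ht, (hcP ht).1.2.2 x y hx (h hy)⟩
      · rintro ⟨t, ht, hbot⟩
        exact (hcP ht).2.1 hbot
      · obtain ⟨t, ht⟩ := hcne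
        exact (hcP ht).2.2.trans (Set.subset_sUnion_of_mem ht)) F₀ hF₀P
    exact ⟨M, h1, h2.1, fun G hG hMG => h2.2 hG hMG⟩
  have hMgood := hMP.1
  have hMbot := hMP.2.1
  have hF₀sub : F₀ ⊆ M := hMP.2.2
  -- ultrafilter property
  have hultra : ∀ x : α, x ∈ M ∨ xᶜ ∈ M := by
    intro x
    by_contra h
    push_neg at h
    obtain ⟨hx, hxc⟩ := h
    set M' : Set α := {b | ∃ c ∈ M, c ⊓ x ≤ b} with hM'
    have hMM' : M ⊆ M' := fun c hc => ⟨c, hc, inf_le_left⟩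
    have hM'P : M' ∈ P := by
      refine ⟨⟨?_, ?_, ?_⟩, ?_, hF₀sub.trans hMM'⟩
      · obtain ⟨c, hc⟩ := hMgood.1
        exact ⟨c ⊓ x, c, hc, le_rfl⟩
      · rintro b b' ⟨c, hc, hle⟩ hbb'
        exact ⟨c, hc, hle.trans hbb'⟩
      · rintro b b' ⟨c, hc, hle⟩ ⟨d, hd, hle'⟩
        exact ⟨c ⊓ d, hMgood.2.2 c d hc hd,
          le_inf ((inf_le_inf_right x inf_le_left).trans hle)
            ((inf_le_inf_right x inf_le_right).trans hle')⟩
      · rintro ⟨c, hc, hle⟩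
        have : c ⊓ x = ⊥ := le_bot_iff.mp hle
        have hcx : c ≤ xᶜ := le_compl_iff_disjoint_right.mpr (disjoint_iff.mpr this)
        exact hxc (hMgood.2.1 c _ hc hcx)
    have := hMmax M' hM'P hMM'
    exact hx (this ⟨hMgood.1.choose, hMgood.1.choose_spec, inf_le_right⟩)
  -- prime
  have hprime : ∀ x y : α, x ⊔ y ∈ M → x ∈ M ∨ y ∈ M := by
    intro x y hxy
    by_contra h
    push_neg at h
    have hxc : xᶜ ∈ M := (hultra x).resolve_left h.1
    have hyc : yᶜ ∈ M := (hultra y).resolve_left h.2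
    have : xᶜ ⊓ yᶜ ∈ M := hMgood.2.2 _ _ hxc hyc
    have hb : (x ⊔ y) ⊓ (xᶜ ⊓ yᶜ) ∈ M := hMgood.2.2 _ _ hxy this
    have : (x ⊔ y) ⊓ (xᶜ ⊓ yᶜ) = ⊥ := by
      rw [← compl_sup, inf_compl_eq_bot]
    rw [this] at hb
    exact hMbot hb
  -- Q property
  have hQ : ∀ X ∈ S, ∀ m : α, IsGLB X m → X ⊆ M → m ∈ M := by
    intro X hX m hglb hXM
    have : X ∈ Set.range e := by rw [← he]; exact Set.mem_insert_of_mem _ hX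
    obtain ⟨n, rfl⟩ := this
    rcases qseq_spec e a ha n m hglb with h | ⟨u, hu, h⟩
    · exact hMgood.2.1 _ _ (hF₀sub ⟨n+1, h⟩) le_rfl
    · exfalso
      have huc : uᶜ ∈ M := hMgood.2.1 _ _ (hF₀sub ⟨n+1, h⟩) le_rfl
      have : u ⊓ uᶜ ∈ M := hMgood.2.2 _ _ (hXM hu) huc
      rw [inf_compl_eq_bot] at this
      exact hMbot this
  exact ⟨M, ⟨⟨hMgood, hMbot, hprime⟩, hQ⟩, hF₀sub ⟨0, le_rfl⟩⟩

/-- Extension of the Jónsson–Tarski representation, non-monotonic case: the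
Stone map into the dual algebra of the neighborhood frame `J̄_S(A)` is an
injective Boolean homomorphism that commutes with `□` and preserves the infima
of members of `S`. -/
theorem jonsson_tarski_nonmonotonic [BooleanAlgebra α] (box : α → α)
    (S : Set (Set α)) (hS : S.Countable) :
    Function.Injective (fset S) ∧
    (∀ x y : α, fset S (x ⊓ y) = fset S x ∩ fset S y) ∧
    (∀ x : α, fset S xᶜ = (fset S x)ᶜ) ∧
    fset S (⊥ : α) = ∅ ∧
    fset S (⊤ : α) = Set.univ ∧
    (∀ x : α, fset S (box x) = {F : QFilt S | fset S x ∈ nbhdBar box S F}) ∧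
    (∀ X ∈ S, ∀ m : α, IsGLB X m → fset S m = ⋂ x ∈ X, fset S x) := by
  classical
  have htop : ∀ F : QFilt S, (⊤ : α) ∈ F.1 := by
    intro F
    obtain ⟨c, hc⟩ := F.2.1.1.1
    exact F.2.1.1.2.1 c ⊤ hc le_top
  have key : ∀ x y : α, ¬ x ≤ y → ∃ F : QFilt S, x ∈ F.1 ∧ y ∉ F.1 := by
    intro x y hxy
    have hne : x ⊓ yᶜ ≠ ⊥ := by
      intro h
      exact hxy (sdiff_eq_bot_iff.mp (by rwa [sdiff_eq]))
    obtain ⟨F, hF, haF⟩ := exists_qfilter hS _ hne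
    refine ⟨⟨F, hF⟩, hF.1.1.2.1 _ x haF inf_le_left, fun hy => ?_⟩
    have hyc : yᶜ ∈ F := hF.1.1.2.1 _ yᶜ haF inf_le_right
    have hb : y ⊓ yᶜ ∈ F := hF.1.1.2.2 _ _ hy hyc
    rw [inf_compl_eq_bot] at hb
    exact hF.1.2.1 hb
  have hmono : ∀ x y : α, fset S x ⊆ fset S y → x ≤ y := by
    intro x y h
    by_contra hxy
    obtain ⟨F, hx, hy⟩ := key x y hxy
    exact hy (h hx)
  have hinj : Function.Injective (fset S) := fun x y h =>
    le_antisymm (hmono x y h.le) (hmono y x h.ge)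
  refine ⟨hinj, ?_, ?_, ?_, ?_, ?_, ?_⟩
  · intro x y
    ext F
    constructor
    · intro h
      exact ⟨F.2.1.1.2.1 _ x h inf_le_left, F.2.1.1.2.1 _ y h inf_le_right⟩
    · rintro ⟨hx, hy⟩
      exact F.2.1.1.2.2 x y hx hy
  · intro x
    ext F
    simp only [fset, Set.mem_setOf_eq, Set.mem_compl_iff]
    constructor
    · intro hxc hx
      have hb : x ⊓ xᶜ ∈ F.1 := F.2.1.1.2.2 x xᶜ hx hxc
      rw [inf_compl_eq_bot] at hb
      exact F.2.1.2.1 hb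
    · intro hx
      have : x ⊔ xᶜ ∈ F.1 := by rw [sup_compl_eq_top]; exact htop F
      exact (F.2.1.2.2 x xᶜ this).resolve_left hx
  · ext F
    simp only [fset, Set.mem_setOf_eq, Set.mem_empty_iff_false, iff_false]
    exact F.2.1.2.1
  · ext F
    simp only [fset, Set.mem_setOf_eq, Set.mem_univ, iff_true]
    exact htop F
  · intro x
    ext F
    simp only [fset, nbhdBar, Set.mem_setOf_eq]
    constructor
    · intro h
      exact ⟨x, h, rfl⟩
    · rintro ⟨y, hy, hyx⟩
      rwa [hinj hyx] at hy
  · intro X hX m hm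
    ext F
    simp only [fset, Set.mem_setOf_eq, Set.mem_iInter]
    constructor
    · intro h x hx
      exact F.2.1.1.2.1 m x h (hm.1 hx)
    · intro h
      exact F.2.2 X hX m hm (fun x hx => h x hx)
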